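/- arXiv:2502.20148 — 2 statements merged into one kernel-verified Lean document; each statement's English description precedes it below -/
import Mathlib

section
/- Let s ≥ 1 be a real number, let r be a natural number with r ≤ s, and let d_1,…,d_r and m_1,…,m_r be real numbers satisfying 1 ≤ d_i ≤ s and m_i ≥ 0 for every i, and ∑_{i=1}^{r} m_i = s. Then ∑_{i=1}^{r} √(d_i · m_i) · log(d_i) ≤ s^{3/2} · log(s). -/
/-!
Bound each `log dᵢ` by `log s`; Cauchy–Schwarz against the constant vector then gives
`∑ √(dᵢ mᵢ) ≤ √(∑ dᵢ mᵢ) · √r`, where `∑ dᵢ mᵢ ≤ s ∑ mᵢ = s²` and `r ≤ s`.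
-/

open Finset

lemma Real.sum_sqrt_le_sqrt_sum_mul_sqrt_card {ι : Type*} (t : Finset ι) {f : ι → ℝ}
    (hf : ∀ i, 0 ≤ f i) : ∑ i ∈ t, √(f i) ≤ √(∑ i ∈ t, f i) * √(#t : ℝ) := by
  simpa using Real.sum_sqrt_mul_sqrt_le t hf (g := fun _ ↦ 1) fun _ ↦ zero_le_one

/-- Total-work bound for quantum partial BFS:
if `r ≤ s`, `1 ≤ dᵢ ≤ s`, `mᵢ ≥ 0` and `∑ mᵢ = s`, then
`∑ √(dᵢ·mᵢ)·log dᵢ ≤ s^{3/2}·log s`. -/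
theorem stmt_1 (s : ℝ) (hs : 1 ≤ s) (r : ℕ) (hr : (r : ℝ) ≤ s)
    (d m : Fin r → ℝ) (hd1 : ∀ i, 1 ≤ d i) (hds : ∀ i, d i ≤ s)
    (hm : ∀ i, 0 ≤ m i) (hsum : ∑ i, m i = s) :
    ∑ i, Real.sqrt (d i * m i) * Real.log (d i) ≤ s * Real.sqrt s * Real.log s := by
  have hdm : ∀ i, 0 ≤ d i * m i := fun i ↦ mul_nonneg (by linarith [hd1 i]) (hm i)
  have hweighted : ∑ i, d i * m i ≤ s * s :=
    calc ∑ i, d i * m i ≤ ∑ i, s * m i :=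
          sum_le_sum fun i _ ↦ mul_le_mul_of_nonneg_right (hds i) (hm i)
      _ = s * s := by rw [← mul_sum, hsum]
  calc ∑ i, √(d i * m i) * Real.log (d i)
      ≤ ∑ i, √(d i * m i) * Real.log s := by
        gcongr with i
        exacts [by linarith [hd1 i], hds i]
    _ = (∑ i, √(d i * m i)) * Real.log s := (sum_mul ..).symm
    _ ≤ √(∑ i, d i * m i) * √(r : ℝ) * Real.log s := by
        gcongr
        · exact Real.log_nonneg hs
        · simpa using Real.sum_sqrt_le_sqrt_sum_mul_sqrt_card univ hdm
    _ ≤ √(s * s) * √s * Real.log s := by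
        gcongr
        exact Real.log_nonneg hs
    _ = s * √s * Real.log s := by rw [Real.sqrt_mul_self (by linarith)]
end

section
/- Let V be a finite set with |V| = n, where n ≥ 2, let 1 ≤ s ≤ n be a natural number, and for each v ∈ V let N(v) ⊆ V be a subset with |N(v)| ≥ s. Let k be a natural number with k ≥ 2 · n · ln(n) / s (as real numbers). Then the number of functions f : {1,…,k} → V such that for every v ∈ V there exists some i ∈ {1,…,k} with f(i) ∈ N(v) is at least n^k − n^{k−1}. -/
/-!
A sample misses `N v` only if all `k` draws land in its complement, which happens for
`(n - |N v|)^k ≤ (n - s)^k` samples; by the union bound at most `n (n - s)^k` samples miss some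
`N v`. Since `1 - x ≤ e^{-x}`, `(n - s)^k ≤ n^k e^{-sk/n}`, and `sk ≥ 2 n ln n` makes this at most
`n^{k-2}`.
-/

open Finset Real

section Counting

variable {ι α V : Type*} [Fintype ι] [Fintype α] [Fintype V] [DecidableEq ι] [DecidableEq V]

lemma card_filter_not_hitting_le (N : α → Finset V) :
    #{f : ι → V | ¬ ∀ v, ∃ i, f i ∈ N v} ≤ ∑ v, (Fintype.card V - #(N v)) ^ Fintype.card ι := by
  have hsub : ({f : ι → V | ¬ ∀ v, ∃ i, f i ∈ N v} : Finset (ι → V)) ⊆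
      univ.biUnion fun v => Fintype.piFinset fun _ => (N v)ᶜ := by
    intro f hf
    simpa using hf
  calc _ ≤ _ := card_le_card hsub
    _ ≤ _ := card_biUnion_le
    _ = _ := by simp [Fintype.card_piFinset, card_compl]

lemma card_sub_mul_pow_le_card_hitting (N : α → Finset V) {s : ℕ} (hN : ∀ v, s ≤ #(N v)) :
    Fintype.card V ^ Fintype.card ι - Fintype.card α * (Fintype.card V - s) ^ Fintype.card ι ≤
      Nat.card {f : ι → V // ∀ v, ∃ i, f i ∈ N v} := by
  have hmiss : ∑ v, (Fintype.card V - #(N v)) ^ Fintype.card ι ≤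
      Fintype.card α * (Fintype.card V - s) ^ Fintype.card ι := by
    calc _ ≤ ∑ _v : α, (Fintype.card V - s) ^ Fintype.card ι := sum_le_sum fun v _ =>
          Nat.pow_le_pow_left (Nat.sub_le_sub_left (hN v) (Fintype.card V)) (Fintype.card ι)
      _ = _ := by rw [sum_const, card_univ, smul_eq_mul]
  have htotal := card_filter_add_card_filter_not (s := (univ : Finset (ι → V)))
    (p := fun f => ∀ v, ∃ i, f i ∈ N v)
  rw [Nat.card_eq_fintype_card, Fintype.card_subtype]
  simp only [card_univ, Fintype.card_fun] at htotal
  have hbad := card_filter_not_hitting_le (ι := ι) N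
  omega

end Counting

lemma sub_pow_le_pow_mul_exp {x y : ℝ} (hx : 0 < x) (hy : y ≤ x) (k : ℕ) :
    (x - y) ^ k ≤ x ^ k * exp (-(y * k / x)) := by
  have hbase : x - y ≤ x * exp (-(y / x)) := by
    have := mul_le_mul_of_nonneg_left (one_sub_le_exp_neg (y / x)) hx.le
    rwa [mul_one_sub, mul_div_cancel₀ y hx.ne'] at this
  calc (x - y) ^ k ≤ (x * exp (-(y / x))) ^ k := pow_le_pow_left₀ (by linarith) hbase k
    _ = x ^ k * exp (-(y * k / x)) := by
      rw [mul_pow, ← exp_nat_mul]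
      ring_nf

lemma sq_mul_sub_pow_le_pow {n s k : ℕ} (hs : 1 ≤ s) (hsn : s ≤ n)
    (hk : 2 * (n : ℝ) * log n / s ≤ k) : n ^ 2 * (n - s) ^ k ≤ n ^ k := by
  have hn : (0 : ℝ) < n := by exact_mod_cast hs.trans hsn
  have hs' : (0 : ℝ) < s := by exact_mod_cast hs
  have hlog : 2 * log n ≤ s * k / n := by
    rw [le_div_iff₀ hn]
    rw [div_le_iff₀ hs'] at hk
    linarith
  have hexp : exp (-(s * k / n : ℝ)) ≤ ((n : ℝ) ^ 2)⁻¹ := by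
    calc exp (-(s * k / n : ℝ)) ≤ exp (-(2 * log n)) := exp_le_exp.mpr (by linarith)
      _ = ((n : ℝ) ^ 2)⁻¹ := by rw [exp_neg, ← Nat.cast_ofNat, ← log_pow, exp_log (by positivity)]
  have hreal : (n : ℝ) ^ 2 * (n - s) ^ k ≤ (n : ℝ) ^ k :=
    calc (n : ℝ) ^ 2 * (n - s) ^ k ≤ n ^ 2 * ((n : ℝ) ^ k * ((n : ℝ) ^ 2)⁻¹) := by
          gcongr
          exact (sub_pow_le_pow_mul_exp hn (by exact_mod_cast hsn) k).trans (by gcongr)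
      _ = (n : ℝ) ^ k := by field_simp
  rw [← Nat.cast_sub hsn] at hreal
  exact_mod_cast hreal

theorem stmt_8_general {V : Type*} [Fintype V] (n s : ℕ) (hn : Fintype.card V = n)
    (hs : 1 ≤ s) (hsn : s ≤ n)
    (N : V → Finset V) (hN : ∀ v, s ≤ (N v).card)
    (k : ℕ) (hk : 2 * (n : ℝ) * Real.log n / s ≤ (k : ℝ)) :
    n ^ k - n ^ (k - 1) ≤ Nat.card {f : Fin k → V // ∀ v, ∃ i, f i ∈ N v} := by
  classical
  obtain rfl | hk0 := Nat.eq_zero_or_pos k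
  · simp
  have hcount := card_sub_mul_pow_le_card_hitting (ι := Fin k) N hN
  rw [Fintype.card_fin, hn] at hcount
  have hmiss : n * (n - s) ^ k ≤ n ^ (k - 1) := by
    have hn0 : 0 < n := by omega
    refine Nat.le_of_mul_le_mul_left ?_ hn0
    rw [← mul_assoc, ← sq, ← pow_succ', Nat.sub_add_cancel hk0]
    exact sq_mul_sub_pow_le_pow hs hsn hk
  exact (Nat.sub_le_sub_left hmiss _).trans hcount

/-- Hitting-set sampling lemma: if `k ≥ 2·n·ln n / s`, at least `n^k − n^{k−1}`
of the `n^k` samples `f : Fin k → V` (with replacement) hit `N(v)` for every `v`. -/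
theorem stmt_8 {V : Type*} [Fintype V] (n s : ℕ) (hn : Fintype.card V = n)
    (hn2 : 2 ≤ n) (hs : 1 ≤ s) (hsn : s ≤ n)
    (N : V → Finset V) (hN : ∀ v, s ≤ (N v).card)
    (k : ℕ) (hk : 2 * (n : ℝ) * Real.log n / s ≤ (k : ℝ)) :
    n ^ k - n ^ (k - 1) ≤ Nat.card {f : Fin k → V // ∀ v, ∃ i, f i ∈ N v} :=
  stmt_8_general n s hn hs hsn N hN k hk
end
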